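/- Let T_n be a sequence of positive real random variables converging to 1 in probability, and let t_n → ∞ be positive reals. Suppose sqrt(t_n)(T_n - 1) converges in distribution to N(0, τ²). Define log B_n = ⌊t_n⌋ (log T_n - (T_n - 1) + (T_n - 1)²/2). Then log B_n → 0 in probability as n → ∞. -/

import Mathlib

open MeasureTheory ProbabilityTheory Filter Set
open scoped Topology ENNReal NNReal

/-! For `|T - 1| ≤ 1/2` the Taylor remainder of `log` at `1` is at most `2 |T - 1|³`, so
`|log B_n| ≤ 2 (√t_n (T_n - 1))² · |T_n - 1|`. The first factor is bounded in probability, since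
the laws of `√t_n (T_n - 1)` converge weakly and hence form a tight family (Prokhorov), while the
second factor tends to `0` in probability; such a product tends to `0` in probability. -/

theorem abs_log_one_add_sub_self_add_sq_div_two_le {u : ℝ} (hu : |u| ≤ 1 / 2) :
    |Real.log (1 + u) - u + u ^ 2 / 2| ≤ 2 * |u| ^ 3 := by
  have h := Real.abs_log_sub_add_sum_range_le (x := -u) (by rw [abs_neg]; linarith) 2
  have heq : ∑ i ∈ Finset.range 2, (-u) ^ (i + 1) / (i + 1) + Real.log (1 - -u)
      = Real.log (1 + u) - u + u ^ 2 / 2 := by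
    simp only [Finset.sum_range_succ, Finset.sum_range_zero]; push_cast; ring_nf
  rw [heq, abs_neg, show 2 + 1 = 3 from rfl] at h
  refine h.trans ((div_le_iff₀ (by linarith)).2 ?_)
  nlinarith [mul_nonneg (pow_nonneg (abs_nonneg u) 3) (by linarith : (0 : ℝ) ≤ 1 - 2 * |u|)]

theorem abs_natFloor_mul_log_remainder_le {s x : ℝ} (hs : 0 ≤ s) (hx : |x - 1| ≤ 1 / 2) :
    |(⌊s⌋₊ : ℝ) * (Real.log x - (x - 1) + (x - 1) ^ 2 / 2)|
      ≤ 2 * (√s * (x - 1)) ^ 2 * |x - 1| := by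
  have hlog := abs_log_one_add_sub_self_add_sq_div_two_le hx
  rw [add_sub_cancel] at hlog
  calc |(⌊s⌋₊ : ℝ) * (Real.log x - (x - 1) + (x - 1) ^ 2 / 2)|
      ≤ s * (2 * |x - 1| ^ 3) := by
        rw [abs_mul, Nat.abs_cast]
        exact mul_le_mul (Nat.floor_le hs) hlog (abs_nonneg _) hs
    _ = 2 * (√s * (x - 1)) ^ 2 * |x - 1| := by
        rw [mul_pow, Real.sq_sqrt hs, pow_succ, sq_abs]; ring

theorem tendsto_measure_le_abs_of_abs_le_mul {Ω ι : Type*} [MeasurableSpace Ω] {μ : Measure Ω}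
    {l : Filter ι} {f g h : ι → Ω → ℝ}
    (hf : ∀ η : ℝ≥0∞, 0 < η → ∃ M : ℝ, ∀ᶠ i in l, μ {ω | M < |f i ω|} ≤ η)
    (hg : ∀ ε : ℝ, 0 < ε → Tendsto (fun i => μ {ω | ε ≤ |g i ω|}) l (𝓝 0))
    {c : ℝ} (hc : 0 < c) (hfgh : ∀ i ω, |g i ω| < c → |h i ω| ≤ |f i ω| * |g i ω|)
    {ε : ℝ} (hε : 0 < ε) : Tendsto (fun i => μ {ω | ε ≤ |h i ω|}) l (𝓝 0) := by
  refine ENNReal.tendsto_nhds_zero.2 fun δ hδ => ?_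
  obtain ⟨M, hM⟩ := hf (δ / 2) (ENNReal.half_pos hδ.ne')
  set r := min c (ε / (|M| + 1))
  have hsub : ∀ i, {ω | ε ≤ |h i ω|} ⊆ {ω | M < |f i ω|} ∪ {ω | r ≤ |g i ω|} := by
    intro i ω hω
    by_contra hout
    simp only [mem_union, mem_ofPred_eq, not_or, not_lt, not_le, r, lt_min_iff] at hω hout
    obtain ⟨hfM, hgc, hgε⟩ := hout
    have hfK : |f i ω| < |M| + 1 := by linarith [le_abs_self M]
    have hfg : |f i ω| * |g i ω| < ε := by
      calc |f i ω| * |g i ω| ≤ (|M| + 1) * |g i ω| := by gcongr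
        _ < (|M| + 1) * (ε / (|M| + 1)) := by gcongr
        _ = ε := by field_simp
    linarith [hfgh i ω hgc, hfg]
  filter_upwards [hM, ENNReal.tendsto_nhds_zero.1 (hg r (lt_min hc (by positivity))) (δ / 2)
    (ENNReal.half_pos hδ.ne')] with i hfi hgi
  calc μ {ω | ε ≤ |h i ω|} ≤ μ {ω | M < |f i ω|} + μ {ω | r ≤ |g i ω|} :=
        (measure_mono (hsub i)).trans (measure_union_le _ _)
    _ ≤ δ / 2 + δ / 2 := add_le_add hfi hgi
    _ = δ := ENNReal.add_halves δ

theorem MeasureTheory.ProbabilityMeasure.isTightMeasureSet_range_of_tendsto {𝓧 : Type*}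
    [MeasurableSpace 𝓧] [PseudoMetricSpace 𝓧] [BorelSpace 𝓧] [SecondCountableTopology 𝓧]
    [CompleteSpace 𝓧]
    {ρ : ℕ → ProbabilityMeasure 𝓧} {ν : ProbabilityMeasure 𝓧} (h : Tendsto ρ atTop (𝓝 ν)) :
    IsTightMeasureSet (range fun n => (ρ n : Measure 𝓧)) := by
  have hcomp : IsCompact (closure (range ρ)) :=
    h.isCompact_insert_range.closure_of_subset (subset_insert _ _)
  convert isTightMeasureSet_of_isCompact_closure hcomp using 1
  ext; simp

theorem MeasureTheory.IsTightMeasureSet.exists_forall_measure_norm_gt_le {E : Type*}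
    [MeasurableSpace E] [NormedAddCommGroup E] {S : Set (Measure E)} (hS : IsTightMeasureSet S)
    {η : ℝ≥0∞} (hη : 0 < η) : ∃ M : ℝ, ∀ ρ ∈ S, ρ {x | M < ‖x‖} ≤ η := by
  obtain ⟨M, hM⟩ := ((ENNReal.tendsto_nhds_zero.1
    (tendsto_measure_norm_gt_of_isTightMeasureSet hS)) η hη).exists
  exact ⟨M, fun ρ hρ => (le_iSup₂ (f := fun ρ (_ : ρ ∈ S) => ρ {x | M < ‖x‖}) ρ hρ).trans hM⟩

theorem exists_forall_measure_norm_gt_le_of_tendsto_map {Ω E : Type*} [MeasurableSpace Ω]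
    {μ : Measure Ω} [NormedAddCommGroup E] [CompleteSpace E]
    [SecondCountableTopology E] [MeasurableSpace E] [BorelSpace E] {X : ℕ → Ω → E}
    (hX : ∀ n, Measurable (X n)) {ρ : ℕ → ProbabilityMeasure E}
    (hρ : ∀ n, ρ n = μ.map (X n)) {ν : ProbabilityMeasure E} (h : Tendsto ρ atTop (𝓝 ν))
    {η : ℝ≥0∞} (hη : 0 < η) : ∃ M : ℝ, ∀ n, μ {ω | M < ‖X n ω‖} ≤ η := by
  obtain ⟨M, hM⟩ :=
    (ProbabilityMeasure.isTightMeasureSet_range_of_tendsto h).exists_forall_measure_norm_gt_le hη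
  refine ⟨M, fun n => ?_⟩
  have hn : (ρ n : Measure E) {x | M < ‖x‖} ≤ η := hM _ ⟨n, rfl⟩
  rwa [hρ, Measure.map_apply (hX n) (measurableSet_lt measurable_const measurable_norm)] at hn

theorem log_Bn_tendsto_zero_in_probability_general
    {Ω : Type*} [MeasurableSpace Ω] (μ : Measure Ω) [IsProbabilityMeasure μ]
    (T : ℕ → Ω → ℝ) (hTm : ∀ n, Measurable (T n))
    (t : ℕ → ℝ) (htpos : ∀ n, 0 < t n)
    (hprob : ∀ ε : ℝ, 0 < ε →
      Tendsto (fun n => μ {ω | ε ≤ |T n ω - 1|}) atTop (𝓝 0))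
    (τ2 : ℝ≥0)
    (hdist : Tendsto
      (fun n => (⟨Measure.map (fun ω => Real.sqrt (t n) * (T n ω - 1)) μ,
        Measure.isProbabilityMeasure_map ((measurable_const.mul ((hTm n).sub measurable_const)).aemeasurable)⟩ : ProbabilityMeasure ℝ))
      atTop (@nhds (ProbabilityMeasure ℝ) _ (⟨gaussianReal 0 τ2, inferInstance⟩ : ProbabilityMeasure ℝ))) :
    ∀ ε : ℝ, 0 < ε →
      Tendsto
        (fun n => μ {ω | ε ≤
          |(⌊t n⌋₊ : ℝ) * (Real.log (T n ω) - (T n ω - 1) + (T n ω - 1) ^ 2 / 2)|})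
        atTop (𝓝 0) := by
  intro ε hε
  set X : ℕ → Ω → ℝ := fun n ω => √(t n) * (T n ω - 1)
  have hX_tail : ∀ η : ℝ≥0∞, 0 < η →
      ∃ M : ℝ, ∀ᶠ n in atTop, μ {ω | M < |2 * X n ω ^ 2|} ≤ η := by
    intro η hη
    obtain ⟨M, hM⟩ := exists_forall_measure_norm_gt_le_of_tendsto_map (X := X)
      (fun n => measurable_const.mul ((hTm n).sub measurable_const)) (fun n => rfl) hdist hη
    refine ⟨2 * M ^ 2, Eventually.of_forall fun n => (measure_mono fun ω hω => ?_).trans (hM n)⟩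
    simp only [mem_ofPred_eq, Real.norm_eq_abs, abs_mul, abs_two, abs_pow] at hω ⊢
    nlinarith [abs_nonneg (X n ω), le_abs_self M]
  refine tendsto_measure_le_abs_of_abs_le_mul hX_tail hprob one_half_pos (fun n ω hn => ?_) hε
  rw [abs_of_nonneg (by positivity : 0 ≤ 2 * X n ω ^ 2)]
  exact abs_natFloor_mul_log_remainder_le (htpos n).le hn.le

/-- Let `T_n` be positive random variables converging to `1` in probability, `t_n → ∞`
positive reals, and suppose `sqrt(t_n)(T_n - 1)` converges in distribution to `N(0, τ²)`.
With `log B_n = ⌊t_n⌋ (log T_n - (T_n - 1) + (T_n - 1)²/2)`, one has `log B_n → 0` in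
probability. -/
theorem log_Bn_tendsto_zero_in_probability
    {Ω : Type*} [MeasurableSpace Ω] (μ : Measure Ω) [IsProbabilityMeasure μ]
    (T : ℕ → Ω → ℝ) (hTm : ∀ n, Measurable (T n)) (hTpos : ∀ n ω, 0 < T n ω)
    (t : ℕ → ℝ) (htpos : ∀ n, 0 < t n) (htlim : Tendsto t atTop atTop)
    (hprob : ∀ ε : ℝ, 0 < ε →
      Tendsto (fun n => μ {ω | ε ≤ |T n ω - 1|}) atTop (𝓝 0))
    (τ2 : ℝ≥0)
    (hdist : Tendsto
      (fun n => (⟨Measure.map (fun ω => Real.sqrt (t n) * (T n ω - 1)) μ,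
        Measure.isProbabilityMeasure_map ((measurable_const.mul ((hTm n).sub measurable_const)).aemeasurable)⟩ : ProbabilityMeasure ℝ))
      atTop (@nhds (ProbabilityMeasure ℝ) _ (⟨gaussianReal 0 τ2, inferInstance⟩ : ProbabilityMeasure ℝ))) :
    ∀ ε : ℝ, 0 < ε →
      Tendsto
        (fun n => μ {ω | ε ≤
          |(⌊t n⌋₊ : ℝ) * (Real.log (T n ω) - (T n ω - 1) + (T n ω - 1) ^ 2 / 2)|})
        atTop (𝓝 0) :=
  log_Bn_tendsto_zero_in_probability_general μ T hTm t htpos hprob τ2 hdist
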